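/- Every strictly constraint MARO-efficient solution x (for some ε ∈ R^n and j) is strictly multi-scenario MARO-efficient for the lower set relation ≦^l. -/

import Mathlib

/-!
A point `y` that is feasible for the ε-constraint problem of `x` in scenario `u` is dominated by an
efficient point of `Y(x,u)` (compactness), which the set relation dominates by an efficient point
`y'` of `Y(x',u)`. Then `y'` is feasible for `x'` with no larger `j`-th objective, so every inner
ε-constraint value of `x'` is at most that of `x`, and so is the worst case over `U`; this
contradicts strict constraint efficiency of `x`.
-/

open Set

section Pareto

variable {α ι : Type*} [Fintype ι]

theorem IsCompact.exists_minimal_le {K : Set (ι → ℝ)} (hK : IsCompact K) {b : ι → ℝ}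
    (hb : b ∈ K) : ∃ a, Minimal (· ∈ K) a ∧ a ≤ b := by
  -- a minimiser of the coordinate sum below `b` is Pareto minimal
  have hsum_cont : Continuous fun a : ι → ℝ => ∑ i, a i :=
    continuous_finsetSum Finset.univ fun i _ => continuous_apply i
  obtain ⟨a, ⟨haK, hab⟩, hmin⟩ := (hK.inter_right (isClosed_Iic (a := b))).exists_isMinOn
    ⟨b, hb, self_mem_Iic⟩ hsum_cont.continuousOn
  refine ⟨a, ⟨haK, fun c hcK hca => ?_⟩, hab⟩
  have hsum : ∑ i, c i = ∑ i, a i :=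
    le_antisymm (Finset.sum_le_sum fun i _ => hca i) (hmin ⟨hcK, hca.trans hab⟩)
  exact fun i => ((Finset.sum_eq_sum_iff_of_le fun i _ => hca i).1 hsum i (Finset.mem_univ i)).ge

variable [TopologicalSpace α]

theorem IsCompact.isCoinitialFor_image_efficient {S : Set α} (hS : IsCompact S)
    {g : α → ι → ℝ} (hg : ContinuousOn g S) :
    IsCoinitialFor (g '' S) (g '' {y ∈ S | ¬ ∃ y' ∈ S, g y' ≤ g y ∧ g y' ≠ g y}) := by
  rintro _ ⟨y, hy, rfl⟩
  obtain ⟨_, ⟨⟨ye, hye, rfl⟩, hmin⟩, hle⟩ := (hS.image_of_continuousOn hg).exists_minimal_le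
    (mem_image_of_mem g hy)
  refine ⟨g ye, ⟨ye, ⟨hye, ?_⟩, rfl⟩, hle⟩
  rintro ⟨y', hy', hle', hne⟩
  exact hne (le_antisymm hle' (hmin (mem_image_of_mem g hy') hle'))

end Pareto

/-- The inner value of the ε-constraint problem; it is `⊤ = sInf ∅` when no point is feasible. -/
noncomputable def epsConstraintValue {α ι : Type*} (g : α → ι → ℝ) (S : Set α) (ε : ι → ℝ)
    (j : ι) : EReal :=
  sInf ((fun y => (g y j : EReal)) '' {y ∈ S | ∀ i, i ≠ j → g y i ≤ ε i})

theorem epsConstraintValue_le_of_isCoinitialFor {α ι : Type*} {g g' : α → ι → ℝ} {S S' : Set α}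
    (h : IsCoinitialFor (g '' S) (g' '' S')) (ε : ι → ℝ) (j : ι) :
    epsConstraintValue g' S' ε j ≤ epsConstraintValue g S ε j := by
  refine sInf_le_sInf_of_isCoinitialFor ?_
  rintro _ ⟨y, ⟨hy, hfeas⟩, rfl⟩
  obtain ⟨_, ⟨y', hy', rfl⟩, hle⟩ := h (mem_image_of_mem g hy)
  exact ⟨_, ⟨y', ⟨hy', fun i hi => (hle i).trans (hfeas i hi)⟩, rfl⟩,
    EReal.coe_le_coe_iff.2 (hle j)⟩

theorem strictly_constraint_implies_strictly_multi_scenario_lower_general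
    {X' U' Y' : Type*} [TopologicalSpace X'] [TopologicalSpace U'] [TopologicalSpace Y']
    (n : ℕ)
    (X : Set X') (U : Set U') (Y : X' → U' → Set Y')
    (f : X' → U' → Y' → Fin n → ℝ)
    (hf : Continuous fun p : X' × U' × Y' => f p.1 p.2.1 p.2.2)
    (hY : ∀ x u, IsCompact (Y x u))
    -- the efficient set of the inner multicriteria problem
    (YE : X' → U' → Set Y')
    (hYE : ∀ x u, YE x u = {y ∈ Y x u |
      ¬ ∃ y' ∈ Y x u, f x u y' ≤ f x u y ∧ f x u y' ≠ f x u y})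
    -- the three-stage ε-constraint value
    (Fc : (Fin n → ℝ) → Fin n → X' → EReal)
    (hFc : ∀ ε j x, Fc ε j x =
      sSup ((fun u => sInf ((fun y => (f x u y j : EReal)) ''
        {y ∈ Y x u | ∀ i, i ≠ j → f x u y i ≤ ε i})) '' U))
    (ε : Fin n → ℝ) (j : Fin n) (x : X')
    -- x strictly constraint MARO-efficient for ε and j
    (heff : ¬ ∃ x' ∈ X, x' ≠ x ∧ Fc ε j x' ≤ Fc ε j x) :
    -- x strictly multi-scenario MARO-efficient for ≦^l
    ¬ ∃ x' ∈ X, x' ≠ x ∧ ∀ u ∈ U,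
      ∀ b ∈ (f x u) '' (YE x u), ∃ a ∈ (f x' u) '' (YE x' u), a ≤ b := by
  rintro ⟨x', hx', hne, hdom⟩
  have hdom_all (u : U') (hu : u ∈ U) : IsCoinitialFor (f x u '' Y x u) (f x' u '' Y x' u) := by
    have hcont : ContinuousOn (f x u) (Y x u) :=
      (hf.comp (by fun_prop : Continuous fun y : Y' => (x, u, y))).continuousOn
    have hE : IsCoinitialFor (f x u '' Y x u) (f x u '' YE x u) :=
      hYE x u ▸ (hY x u).isCoinitialFor_image_efficient hcont
    refine (hE.trans (hdom u hu)).mono_right (image_mono ?_)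
    exact hYE x' u ▸ sep_subset _ _
  refine heff ⟨x', hx', hne, ?_⟩
  simp only [hFc, sSup_image]
  exact iSup₂_mono fun u hu => epsConstraintValue_le_of_isCoinitialFor (hdom_all u hu) ε j

/-- Every strictly constraint MARO-efficient solution `x` (for some `ε` and `j`) is strictly
multi-scenario MARO-efficient for the lower set relation `≦^l` (on the images of the inner
efficient sets): there is no `x' ∈ X \ {x}` such that for all `u ∈ U`, every point of
`f(x,u,Y(x,u)_E)` is componentwise dominated by some point of `f(x',u,Y(x',u)_E)`. -/
theorem strictly_constraint_implies_strictly_multi_scenario_lower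
    {X' U' Y' : Type*} [TopologicalSpace X'] [TopologicalSpace U'] [TopologicalSpace Y']
    (n : ℕ)
    (X : Set X') (U : Set U') (Y : X' → U' → Set Y')
    (f : X' → U' → Y' → Fin n → ℝ)
    (hf : Continuous fun p : X' × U' × Y' => f p.1 p.2.1 p.2.2)
    (hX : IsCompact X) (hU : IsCompact U) (hUne : U.Nonempty)
    (hY : ∀ x u, IsCompact (Y x u)) (hYne : ∀ x u, (Y x u).Nonempty)
    -- the efficient set of the inner multicriteria problem
    (YE : X' → U' → Set Y')
    (hYE : ∀ x u, YE x u = {y ∈ Y x u |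
      ¬ ∃ y' ∈ Y x u, f x u y' ≤ f x u y ∧ f x u y' ≠ f x u y})
    -- the three-stage ε-constraint value
    (Fc : (Fin n → ℝ) → Fin n → X' → EReal)
    (hFc : ∀ ε j x, Fc ε j x =
      sSup ((fun u => sInf ((fun y => (f x u y j : EReal)) ''
        {y ∈ Y x u | ∀ i, i ≠ j → f x u y i ≤ ε i})) '' U))
    (ε : Fin n → ℝ) (j : Fin n) (x : X') (hx : x ∈ X)
    -- x strictly constraint MARO-efficient for ε and j
    (heff : ¬ ∃ x' ∈ X, x' ≠ x ∧ Fc ε j x' ≤ Fc ε j x) :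
    -- x strictly multi-scenario MARO-efficient for ≦^l
    ¬ ∃ x' ∈ X, x' ≠ x ∧ ∀ u ∈ U,
      ∀ b ∈ (f x u) '' (YE x u), ∃ a ∈ (f x' u) '' (YE x' u), a ≤ b :=
  strictly_constraint_implies_strictly_multi_scenario_lower_general n X U Y f hf hY YE hYE Fc hFc ε
    j x heff
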